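/- Let m = 2ℓ − 1 ≥ 1 be an odd integer, let α satisfy 3/m ≤ α ≤ 2/√m and α ≤ 1/2, and let X ~ Binomial(m, 1/2 + α). Then P(X < ℓ) ≤ 1/2 − (1/100)·√m·α. -/

import Mathlib

open Finset

/-- `P(X < ℓ)` for `X ~ Binomial(m, q)`. -/
noncomputable def binomialLow (m ℓ : ℕ) (q : ℝ) : ℝ :=
  ∑ x ∈ Finset.range ℓ, (m.choose x : ℝ) * q ^ x * (1 - q) ^ (m - x)

lemma cb_sq (n : ℕ) (hn : 1 ≤ n) : 16 ^ n ≤ 4 * n * (Nat.centralBinom n)^2 := by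
  induction n with
  | zero => omega
  | succ k ih =>
    rcases Nat.eq_or_lt_of_le hn with h | h
    · simp [← h, Nat.centralBinom]
    · have hk : 1 ≤ k := by omega
      have ihk := ih hk
      have key := Nat.succ_mul_centralBinom_succ k
      have hpos : 0 < k * (k+1) := by positivity
      refine Nat.le_of_mul_le_mul_left ?_ hpos
      calc k * (k+1) * 16 ^ (k+1) = 16 * (k * (k+1)) * 16 ^ k := by ring
        _ ≤ 4 * (2*k+1)^2 * 16 ^ k := Nat.mul_le_mul_right _ (by nlinarith)
        _ ≤ 4 * (2*k+1)^2 * (4 * k * (Nat.centralBinom k)^2) :=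
            Nat.mul_le_mul_left _ ihk
        _ = 4 * k * ((k+1) * Nat.centralBinom (k+1))^2 := by rw [key]; ring
        _ = k * (k+1) * (4 * (k+1) * Nat.centralBinom (k+1)^2) := by ring

lemma binomialLow_hasDerivAt (ℓ m : ℕ) (hℓ : 1 ≤ ℓ) (hm : m = 2 * ℓ - 1) (q : ℝ) :
    HasDerivAt (binomialLow m ℓ)
      (-((m : ℝ) * ((m-1).choose (ℓ-1)) * (q * (1-q)) ^ (ℓ-1))) q := by
  have hmℓ : ℓ ≤ m := by omega
  have hm1 : m - 1 + 1 = m := by omega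
  set T : ℕ → ℝ := fun k =>
    if k = 0 then 0 else (m : ℝ) * ((m-1).choose (k-1)) * q^(k-1) * (1-q)^(m-k) with hT
  have key : ∀ x ∈ Finset.range ℓ,
      HasDerivAt (fun q : ℝ => (m.choose x : ℝ) * q ^ x * (1 - q) ^ (m - x))
        (T x - T (x+1)) q := by
    intro x hx
    have hxℓ : x < ℓ := Finset.mem_range.mp hx
    have hxm : x ≤ m := by omega
    have h1 : HasDerivAt (fun q : ℝ => q ^ x) ((x:ℝ) * q ^ (x-1)) q := hasDerivAt_pow x q
    have h2 : HasDerivAt (fun q : ℝ => (1 - q) ^ (m - x))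
        (-(((m-x : ℕ):ℝ) * (1-q) ^ (m-x-1))) q := by
      have := ((hasDerivAt_pow (m-x) (1-q)).comp q
        ((hasDerivAt_const q (1:ℝ)).sub (hasDerivAt_id q)))
      simpa [Function.comp_def] using this
    have h3 := (h1.const_mul (m.choose x : ℝ)).mul h2
    refine h3.congr_deriv (Eq.symm ?_)
    have id1 : (m:ℝ) * ((m-1).choose x) = (m.choose x : ℝ) * ((m-x : ℕ):ℝ) := by
      have h := Nat.choose_mul_succ_eq (m-1) x
      rw [Nat.sub_add_cancel (by omega : 1 ≤ m)] at h
      have := congrArg (Nat.cast (R := ℝ)) h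
      push_cast [hxm] at this ⊢
      linarith
    rcases Nat.eq_zero_or_pos x with hx0 | hx0
    · subst hx0
      simp [hT]
    · have id2 : (m:ℝ) * ((m-1).choose (x-1)) = (m.choose x : ℝ) * (x:ℝ) := by
        have h := Nat.add_one_mul_choose_eq (m-1) (x-1)
        rw [hm1, Nat.sub_add_cancel (by omega : 1 ≤ x)] at h
        exact_mod_cast congrArg (Nat.cast (R := ℝ)) h
      have hxne : x ≠ 0 := by omega
      have hxne' : x + 1 ≠ 0 := by omega
      simp only [hT]
      rw [if_neg hxne, if_neg hxne']
      have e1 : x + 1 - 1 = x := by omega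
      have e2 : m - x - 1 = m - (x+1) := by omega
      rw [e1, ← e2]
      linear_combination (q^(x-1)*(1-q)^(m-x)) * id2 - (q^x*(1-q)^(m-x-1)) * id1
  have hsum := HasDerivAt.fun_sum key
  have htel : ∑ x ∈ Finset.range ℓ, (T x - T (x+1)) = T 0 - T ℓ :=
    Finset.sum_range_sub' T ℓ
  rw [htel] at hsum
  have hℓne : ℓ ≠ 0 := by omega
  have hmmℓ : m - ℓ = ℓ - 1 := by omega
  simp only [hT, if_pos rfl, if_neg hℓne, hmmℓ, zero_sub] at hsum
  have heq : -((m : ℝ) * ((m-1).choose (ℓ-1)) * (q * (1-q)) ^ (ℓ-1))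
      = -((m : ℝ) * ((m-1).choose (ℓ-1)) * q^(ℓ-1) * (1-q)^(ℓ-1)) := by
    rw [mul_pow]; ring
  rw [heq]
  exact hsum

lemma binomialLow_half (ℓ m : ℕ) (hℓ : 1 ≤ ℓ) (hm : m = 2 * ℓ - 1) :
    binomialLow m ℓ (1/2 : ℝ) = 1/2 := by
  have hmℓ : ℓ ≤ m := by omega
  have h1 : ∀ x ∈ Finset.range ℓ, (m.choose x : ℝ) * (1/2)^x * (1-(1/2:ℝ))^(m-x)
      = (m.choose x : ℝ) * (1/2)^m := by
    intro x hx
    have hxm : x ≤ m := by have := Finset.mem_range.mp hx; omega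
    rw [show ((1:ℝ)-1/2) = 1/2 by norm_num, mul_assoc, ← pow_add,
      Nat.add_sub_cancel' hxm]
  rw [binomialLow, Finset.sum_congr rfl h1, ← Finset.sum_mul]
  have h2 := Nat.sum_range_choose_halfway (ℓ-1)
  rw [show 2*(ℓ-1)+1 = m by omega, show ℓ-1+1 = ℓ by omega] at h2
  have h3 : (∑ x ∈ Finset.range ℓ, (m.choose x : ℝ)) = 4^(ℓ-1) := by
    exact_mod_cast congrArg (Nat.cast (R := ℝ)) h2
  rw [h3, show m = 2*(ℓ-1)+1 by omega, pow_succ, pow_mul]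
  norm_num
  rw [← mul_assoc, ← mul_pow]
  norm_num

set_option maxHeartbeats 1000000 in
/-- For odd `m = 2ℓ - 1 ≥ 1`, `α` with `3/m ≤ α ≤ 2/√m` and `α ≤ 1/2`, and
`X ~ Binomial(m, 1/2 + α)`: `P(X < ℓ) ≤ 1/2 - (1/100) √m α`. -/
theorem binomial_medium_bias (ℓ m : ℕ) (α : ℝ) (hℓ : 1 ≤ ℓ) (hm : m = 2 * ℓ - 1)
    (hα₁ : 3 / (m : ℝ) ≤ α) (hα₂ : α ≤ 2 / Real.sqrt m) (hα₃ : α ≤ 1 / 2) :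
    binomialLow m ℓ (1 / 2 + α) ≤ 1 / 2 - (1 / 100) * Real.sqrt m * α := by
  have hm1 : 1 ≤ m := by omega
  have hmR : (1:ℝ) ≤ m := by exact_mod_cast hm1
  -- m ≥ 6
  have hm6 : (6:ℝ) ≤ m := by
    rw [div_le_iff₀ (by linarith)] at hα₁
    nlinarith
  have hm6' : 6 ≤ m := by exact_mod_cast hm6
  set n := ℓ - 1 with hn
  have hℓn : ℓ = n + 1 := by omega
  have hmn : m = 2*n + 1 := by omega
  have hn1 : 1 ≤ n := by omega
  have hmnR : (m:ℝ) = 2*(n:ℝ) + 1 := by exact_mod_cast hmn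
  have hα0 : 0 < α := lt_of_lt_of_le (by positivity) hα₁
  set s := Real.sqrt m with hs
  have hs0 : 0 < s := Real.sqrt_pos.mpr (by linarith)
  have hs2 : s^2 = m := Real.sq_sqrt (by linarith)
  have hsα : s * α ≤ 2 := by
    rw [le_div_iff₀ hs0] at hα₂; linarith
  set β := min α (1/(2*s)) with hβ
  have hβα : β ≤ α := min_le_left _ _
  have hβpos : 0 < β := lt_min hα0 (by positivity)
  have hβhalf : β ≤ 1/2 := le_trans hβα hα₃
  have hβsq : β^2 ≤ 1/(4*(m:ℝ)) := by
    have h1 : β ≤ 1/(2*s) := min_le_right _ _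
    have : β^2 ≤ (1/(2*s))^2 := by
      apply pow_le_pow_left₀ hβpos.le h1
    calc β^2 ≤ (1/(2*s))^2 := this
      _ = 1/(4*s^2) := by ring
      _ = 1/(4*(m:ℝ)) := by rw [hs2]
  set c0 : ℝ := (m : ℝ) * ((m-1).choose (ℓ-1)) with hc0
  have hc0nn : 0 ≤ c0 := by positivity
  -- central binomial lower bound :  s ≤ 2 * c0 * (1/4)^n
  have hcb : s ≤ 2 * (c0 * (1/4)^n) := by
    have hnat := cb_sq n hn1
    have hcbR : (16:ℝ)^n ≤ 4 * n * ((Nat.centralBinom n : ℝ))^2 := by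
      exact_mod_cast hnat
    have hchoose : ((m-1).choose (ℓ-1) : ℝ) = (Nat.centralBinom n : ℝ) := by
      have : (m-1).choose (ℓ-1) = Nat.centralBinom n := by
        rw [Nat.centralBinom]
        congr 1
        omega
      rw [this]
    have hsq : (m:ℝ) ≤ (2 * (c0 * (1/4)^n))^2 := by
      have h16 : ((1:ℝ)/4)^n * ((1:ℝ)/4)^n * 16^n = 1 := by
        rw [← mul_pow, ← mul_pow]; norm_num
      have hC : (0:ℝ) ≤ (Nat.centralBinom n : ℝ) := by positivity
      have hnm : (n:ℝ) ≤ (m:ℝ) := by nlinarith [hmnR]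
      have expand : (2 * (c0 * (1/4)^n))^2
          = 4 * (m:ℝ)^2 * ((Nat.centralBinom n : ℝ))^2 * ((1/4)^n * (1/4)^n) := by
        rw [hc0, hchoose]; ring
      rw [expand]
      have h1 : 4 * (n:ℝ) * ((Nat.centralBinom n : ℝ))^2 * ((1/4)^n * (1/4)^n)
          ≥ 16^n * ((1/4)^n * (1/4)^n) := by
        apply mul_le_mul_of_nonneg_right hcbR (by positivity)
      have h2 : (16:ℝ)^n * ((1/4)^n * (1/4)^n) = 1 := by
        rw [← mul_pow, ← mul_pow]; norm_num
      rw [h2] at h1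
      have hnpos : (0:ℝ) < n := by exact_mod_cast hn1
      -- 4 m² C² (1/16)ⁿ ≥ (m²/n) * (4 n C² (1/16)ⁿ) / 4... direct:
      have h3 : 4 * (m:ℝ)^2 * ((Nat.centralBinom n : ℝ))^2 * ((1/4)^n * (1/4)^n)
          = ((m:ℝ)^2/(n:ℝ)) * (4 * (n:ℝ) * ((Nat.centralBinom n : ℝ))^2 * ((1/4)^n * (1/4)^n)) := by
        field_simp
      rw [h3]
      have h4 : (m:ℝ) ≤ (m:ℝ)^2/(n:ℝ) := by
        rw [le_div_iff₀ hnpos]; nlinarith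
      calc (m:ℝ) ≤ (m:ℝ)^2/(n:ℝ) := h4
        _ = ((m:ℝ)^2/(n:ℝ)) * 1 := by ring
        _ ≤ ((m:ℝ)^2/(n:ℝ)) * (4 * (n:ℝ) * ((Nat.centralBinom n : ℝ))^2 * ((1/4)^n * (1/4)^n)) := by
            apply mul_le_mul_of_nonneg_left h1 (by positivity)
    calc s = Real.sqrt m := hs
      _ ≤ Real.sqrt ((2 * (c0 * (1/4)^n))^2) := Real.sqrt_le_sqrt hsq
      _ = 2 * (c0 * (1/4)^n) := Real.sqrt_sq (by positivity)
  -- Bernoulli : (1 - 4β²)^n ≥ 1/2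
  have hbern : (1/2 : ℝ) ≤ (1 - 4*β^2)^n := by
    have h1 : 1 + (n:ℝ) * (-(4*β^2)) ≤ (1 + (-(4*β^2)))^n := by
      apply one_add_mul_le_pow
      nlinarith
    have hβm : (4:ℝ)*β^2 ≤ 1/(m:ℝ) := by
      rw [le_div_iff₀ (by linarith : (0:ℝ) < m)]
      calc 4*β^2*(m:ℝ) = (β^2)*(4*(m:ℝ)) := by ring
        _ ≤ (1/(4*(m:ℝ)))*(4*(m:ℝ)) := mul_le_mul_of_nonneg_right hβsq (by linarith)
        _ = 1 := by field_simp
    have h2 : (n:ℝ) * (4*β^2) ≤ (n:ℝ)/(m:ℝ) := by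
      calc (n:ℝ) * (4*β^2) ≤ (n:ℝ) * (1/(m:ℝ)) :=
            mul_le_mul_of_nonneg_left hβm (by positivity)
        _ = (n:ℝ)/(m:ℝ) := by ring
    have h3 : (n:ℝ)/(m:ℝ) ≤ 1/2 := by
      rw [div_le_iff₀ (by linarith : (0:ℝ) < m)]
      nlinarith [hmnR]
    have : (1:ℝ)/2 ≤ 1 + (n:ℝ) * (-(4*β^2)) := by nlinarith
    calc (1/2:ℝ) ≤ 1 + (n:ℝ) * (-(4*β^2)) := this
      _ ≤ (1 + (-(4*β^2)))^n := h1
      _ = (1 - 4*β^2)^n := by ring_nf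
  -- derivative facts
  have hderiv : ∀ q : ℝ, HasDerivAt (binomialLow m ℓ) (-(c0 * (q * (1-q)) ^ n)) q := by
    intro q
    have := binomialLow_hasDerivAt ℓ m hℓ hm q
    rwa [hc0, hn]
  have hdiff : Differentiable ℝ (binomialLow m ℓ) := fun q => (hderiv q).differentiableAt
  -- MVT on [1/2, 1/2+β]
  obtain ⟨c, hcmem, hceq⟩ := exists_hasDerivAt_eq_slope (binomialLow m ℓ)
    (fun t => -(c0 * (t * (1-t)) ^ n)) (by linarith : (1/2:ℝ) < 1/2 + β)
    (hdiff.continuous.continuousOn) (fun x _ => hderiv x)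
  rw [binomialLow_half ℓ m hℓ hm] at hceq
  -- bound the derivative at c
  have hc1 : 1/2 < c := hcmem.1
  have hc2 : c < 1/2 + β := hcmem.2
  have hprod : 1/4 - β^2 ≤ c * (1-c) := by nlinarith
  have hprodnn : (0:ℝ) ≤ 1/4 - β^2 := by nlinarith
  have hpow : (1/4 - β^2)^n ≤ (c*(1-c))^n := pow_le_pow_left₀ hprodnn hprod n
  have hsplit : (1/4 - β^2)^n = (1/4)^n * (1 - 4*β^2)^n := by
    rw [← mul_pow]; ring_nf
  have hlow : s/4 ≤ c0 * (c*(1-c))^n := by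
    have h1 : c0 * ((1/4)^n * (1 - 4*β^2)^n) ≤ c0 * (c*(1-c))^n := by
      apply mul_le_mul_of_nonneg_left _ hc0nn
      rw [← hsplit]; exact hpow
    have h2 : s/4 ≤ c0 * ((1/4)^n * (1 - 4*β^2)^n) := by
      have h3 : c0 * (1/4)^n * (1/2) ≤ c0 * (1/4)^n * (1 - 4*β^2)^n := by
        apply mul_le_mul_of_nonneg_left hbern (by positivity)
      calc s/4 ≤ c0 * (1/4)^n * (1/2) := by linarith [hcb]
        _ ≤ c0 * (1/4)^n * (1 - 4*β^2)^n := h3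
        _ = c0 * ((1/4)^n * (1 - 4*β^2)^n) := by ring
    linarith
  -- value at 1/2 + β
  have hvalβ : binomialLow m ℓ (1/2 + β) ≤ 1/2 - β * (s/4) := by
    have hden : (1/2 + β - (1/2:ℝ)) = β := by ring
    rw [hden, eq_div_iff (ne_of_gt hβpos)] at hceq
    have hmul := mul_le_mul_of_nonneg_right hlow hβpos.le
    linarith
  -- antitone from 1/2+β to 1/2+α
  have hanti : binomialLow m ℓ (1/2 + α) ≤ binomialLow m ℓ (1/2 + β) := by
    have hAnti : AntitoneOn (binomialLow m ℓ) (Set.Icc (1/2 + β) (1/2 + α)) := by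
      apply antitoneOn_of_deriv_nonpos (convex_Icc _ _)
        hdiff.continuous.continuousOn
        (hdiff.differentiableOn)
      intro x hx
      rw [interior_Icc] at hx
      rw [(hderiv x).deriv]
      have hx1 : 1/2 + β < x := hx.1
      have hx2 : x < 1/2 + α := hx.2
      have : (0:ℝ) ≤ x * (1-x) := by nlinarith
      have : (0:ℝ) ≤ (x * (1-x))^n := pow_nonneg this n
      nlinarith [mul_nonneg hc0nn this]
    exact hAnti (Set.left_mem_Icc.mpr (by linarith)) (Set.right_mem_Icc.mpr (by linarith)) (by linarith)
  -- final constants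
  have hfinal : (1/100) * s * α ≤ β * (s/4) := by
    rcases le_or_gt α (1/(2*s)) with h | h
    · have : β = α := min_eq_left h
      rw [this]
      nlinarith
    · have : β = 1/(2*s) := min_eq_right h.le
      rw [this]
      have : (1/(2*s)) * (s/4) = 1/8 := by field_simp; ring
      rw [this]
      nlinarith
  calc binomialLow m ℓ (1/2 + α) ≤ binomialLow m ℓ (1/2 + β) := hanti
    _ ≤ 1/2 - β * (s/4) := hvalβ
    _ ≤ 1/2 - (1/100) * s * α := by linarith
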